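/- arXiv:2212.08642 — 4 statements merged into one kernel-verified Lean document; each statement's English description precedes it below -/
import Mathlib

section
/- Let T = S ×₁Π₁ ×₂Π₂ ×₃Π₃ ∈ ℝ^{p₁×p₂×p₃} be a tensor mixed-membership blockmodel with S ∈ ℝ^{r₁×r₂×r₃} and membership matrices Π_k ∈ ℝ^{p_k×r_k}. Suppose for every k ∈ {1,2,3}: r_k ≤ ∏_{j≠k} r_j, the matricization M_k(S) has rank r_k, and for every community l ∈ {1,…,r_k} there is at least one pure node for community l in Π_k. If S' ∈ ℝ^{r₁×r₂×r₃} and membership matrices Π'_k ∈ ℝ^{p_k×r_k} satisfy the same conditions (rank M_k(S') = r_k and at least one pure node per community in each Π'_k) and S' ×₁Π'₁ ×₂Π'₂ ×₃Π'₃ = T, then there exist permutation matrices P_k ∈ ℝ^{r_k×r_k} such that Π'_k = Π_k P_k for k = 1,2,3 and S' = S ×₁P₁ᵀ ×₂P₂ᵀ ×₃P₃ᵀ. -/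
open Matrix
open scoped BigOperators Kronecker

noncomputable section

/-- A `p₁ × p₂ × p₃` real tensor. -/
abbrev Tensor3 (p₁ p₂ p₃ : ℕ) := Fin p₁ → Fin p₂ → Fin p₃ → ℝ

/-- Mode-1 matricization. -/
def mat1 {p₁ p₂ p₃ : ℕ} (T : Tensor3 p₁ p₂ p₃) : Matrix (Fin p₁) (Fin p₂ × Fin p₃) ℝ :=
  fun i jk => T i jk.1 jk.2

/-- Mode-2 matricization. -/
def mat2 {p₁ p₂ p₃ : ℕ} (T : Tensor3 p₁ p₂ p₃) : Matrix (Fin p₂) (Fin p₁ × Fin p₃) ℝ :=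
  fun j ik => T ik.1 j ik.2

/-- Mode-3 matricization. -/
def mat3 {p₁ p₂ p₃ : ℕ} (T : Tensor3 p₁ p₂ p₃) : Matrix (Fin p₃) (Fin p₁ × Fin p₂) ℝ :=
  fun k ij => T ij.1 ij.2 k

/-- Multilinear (Tucker) action `S ×₁ A ×₂ B ×₃ C`. -/
def tmul {r₁ r₂ r₃ p₁ p₂ p₃ : ℕ} (S : Tensor3 r₁ r₂ r₃)
    (A : Matrix (Fin p₁) (Fin r₁) ℝ) (B : Matrix (Fin p₂) (Fin r₂) ℝ)
    (C : Matrix (Fin p₃) (Fin r₃) ℝ) : Tensor3 p₁ p₂ p₃ :=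
  fun i j k => ∑ a, ∑ b, ∑ c, A i a * B j b * C k c * S a b c

/-- A membership matrix: nonnegative entries, rows summing to one. -/
def IsMembership {p r : ℕ} (P : Matrix (Fin p) (Fin r) ℝ) : Prop :=
  (∀ i l, 0 ≤ P i l) ∧ ∀ i, ∑ l, P i l = 1

/-- Index `i` is a pure node for community `l`. -/
def IsPureRow {p r : ℕ} (P : Matrix (Fin p) (Fin r) ℝ) (i : Fin p) (l : Fin r) : Prop :=
  ∀ l', P i l' = if l' = l then 1 else 0

/-- A permutation matrix. -/
def IsPermMatrix {r : ℕ} (P : Matrix (Fin r) (Fin r) ℝ) : Prop :=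
  ∃ e : Equiv.Perm (Fin r), ∀ i j, P i j = if j = e i then 1 else 0

/-!
Restricted to its pure nodes, a membership matrix becomes the identity. Matricizing along mode k
gives `Π'_k W'_k = Π_k W_k` with `W_k = M_k(S) (Π_j ⊗ Π_l)ᵀ`, and `W_k` has independent rows because
its columns at pure nodes reproduce `M_k(S)`. Reading this identity at the pure nodes of `Π_k` and
of `Π'_k` gives `W_k = A W'_k` and `W'_k = B W_k` with `A`, `B` row-stochastic, hence `A B = 1`;
a row-stochastic matrix with a nonnegative right inverse is a permutation matrix `R_k`, and then
`Π'_k = Π_k R_k`. Finally `S' ×₁ R₁ ×₂ R₂ ×₃ R₃` and `S` agree at the pure nodes, so they are equal.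
-/

open Matrix

theorem Matrix.linearIndependent_row_of_rank_eq_card {K m n : Type*} [Field K] [Fintype m]
    [Fintype n] {M : Matrix m n K} (h : M.rank = Fintype.card m) : LinearIndependent K M.row :=
  linearIndependent_iff_card_eq_finrank_span.mpr (by rw [← h, M.rank_eq_finrank_span_row]; rfl)

theorem Matrix.mul_right_cancel_of_linearIndependent_row {R k m n : Type*} [CommRing R]
    [Fintype m] {W : Matrix m n R} (hW : LinearIndependent R W.row) {X Y : Matrix k m R}
    (h : X * W = Y * W) : X = Y := by
  funext i
  apply Matrix.vecMul_injective_iff.mpr hW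
  simpa only [mul_apply_eq_vecMul] using congrFun h i

theorem IsPermMatrix.transpose_mul_self {r : ℕ} {R : Matrix (Fin r) (Fin r) ℝ}
    (hR : IsPermMatrix R) : Rᵀ * R = 1 := by
  obtain ⟨e, he⟩ := hR
  have hRe : R = e.permMatrix ℝ := by
    ext i j
    simp [he, PEquiv.toMatrix_apply, eq_comm]
  rw [hRe, transpose_permMatrix, ← permMatrix_mul, mul_inv_cancel, permMatrix_one]

theorem IsMembership.submatrix {p q r : ℕ} {P : Matrix (Fin p) (Fin r) ℝ} (hP : IsMembership P)
    (σ : Fin q → Fin p) : IsMembership (P.submatrix σ id) :=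
  ⟨fun i l => hP.1 (σ i) l, fun i => hP.2 (σ i)⟩

theorem exists_submatrix_eq_one_of_isPureRow {p r : ℕ} {P : Matrix (Fin p) (Fin r) ℝ}
    (hP : ∀ l, ∃ i, IsPureRow P i l) : ∃ σ : Fin r → Fin p, P.submatrix σ id = 1 := by
  choose σ hσ using hP
  exact ⟨σ, ext fun l l' => by simp [hσ l l', one_apply, eq_comm]⟩

theorem IsMembership.exists_isPureRow_of_mul_eq_one {r : ℕ} {A B : Matrix (Fin r) (Fin r) ℝ}
    (hA : IsMembership A) (hB : ∀ i j, 0 ≤ B i j) (hAB : A * B = 1) (i : Fin r) :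
    ∃ l, IsPureRow A i l := by
  have hii : ∑ k, A i k * B k i ≠ 0 := by
    rw [← mul_apply, hAB, one_apply_eq]; exact one_ne_zero
  obtain ⟨k, -, hk⟩ := Finset.exists_ne_zero_of_sum_ne_zero hii
  have hBki : B k i ≠ 0 := right_ne_zero_of_mul hk
  have hoff : ∀ j, j ≠ k → A i j = 0 := by
    intro j hj
    have hkj : ∑ m, B k m * A m j = 0 := by
      rw [← mul_apply, mul_eq_one_comm.mp hAB, one_apply_ne hj.symm]
    have := (Finset.sum_eq_zero_iff_of_nonneg fun m _ => mul_nonneg (hB k m) (hA.1 m j)).mp hkj i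
      (Finset.mem_univ i)
    exact (mul_eq_zero.mp this).resolve_left hBki
  have hAik : A i k = 1 := by rw [← hA.2 i, Fintype.sum_eq_single k hoff]
  refine ⟨k, fun l => ?_⟩
  split_ifs with hl
  · rw [hl, hAik]
  · exact hoff l hl

theorem IsMembership.isPermMatrix_of_mul_eq_one {r : ℕ} {A B : Matrix (Fin r) (Fin r) ℝ}
    (hA : IsMembership A) (hB : ∀ i j, 0 ≤ B i j) (hAB : A * B = 1) : IsPermMatrix A := by
  choose f hf using hA.exists_isPureRow_of_mul_eq_one hB hAB
  have hinj : Function.Injective f := by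
    intro i i' hii'
    have hrow : A i = A i' := funext fun l => by rw [hf i l, hf i' l, hii']
    have := congrFun (congrFun hAB i) i
    rw [mul_apply_eq_vecMul, hrow, ← mul_apply_eq_vecMul, hAB, one_apply_eq] at this
    by_contra hne
    rw [one_apply_ne (Ne.symm hne)] at this
    exact zero_ne_one this
  exact ⟨Equiv.ofBijective f (Finite.injective_iff_bijective.mp hinj), hf⟩

theorem Matrix.submatrix_id_mul {l m n o α : Type*} [Fintype n] [Mul α] [AddCommMonoid α]
    (P : Matrix m n α) (M : Matrix n o α) (σ : l → m) :
    (P * M).submatrix σ id = P.submatrix σ id * M :=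
  rfl

theorem exists_isPermMatrix_eq_mul_of_mul_eq_mul {p r : ℕ} {μ : Type*}
    {P Q : Matrix (Fin p) (Fin r) ℝ} {W W' : Matrix (Fin r) μ ℝ}
    (hP : IsMembership P) (hQ : IsMembership Q)
    (hPp : ∀ l, ∃ i, IsPureRow P i l) (hQp : ∀ l, ∃ i, IsPureRow Q i l)
    (hW : LinearIndependent ℝ W.row) (hW' : LinearIndependent ℝ W'.row) (h : Q * W' = P * W) :
    ∃ R : Matrix (Fin r) (Fin r) ℝ, IsPermMatrix R ∧ Q = P * R := by
  obtain ⟨σ, hσ⟩ := exists_submatrix_eq_one_of_isPureRow hPp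
  obtain ⟨τ, hτ⟩ := exists_submatrix_eq_one_of_isPureRow hQp
  have hA : Q.submatrix σ id * W' = W := by
    rw [← submatrix_id_mul, h, submatrix_id_mul, hσ, Matrix.one_mul]
  have hB : P.submatrix τ id * W = W' := by
    rw [← submatrix_id_mul, ← h, submatrix_id_mul, hτ, Matrix.one_mul]
  have hAB : Q.submatrix σ id * P.submatrix τ id = 1 :=
    mul_right_cancel_of_linearIndependent_row hW (by rw [Matrix.mul_assoc, hB, hA, Matrix.one_mul])
  refine ⟨Q.submatrix σ id,
    (hQ.submatrix σ).isPermMatrix_of_mul_eq_one (fun i j => hP.1 (τ i) j) hAB, ?_⟩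
  exact mul_right_cancel_of_linearIndependent_row hW' (by rw [h, Matrix.mul_assoc, hA])

theorem linearIndependent_row_mul_kronecker_transpose {r a b p q : ℕ}
    {M : Matrix (Fin r) (Fin a × Fin b) ℝ} (hM : LinearIndependent ℝ M.row)
    {B : Matrix (Fin p) (Fin a) ℝ} {C : Matrix (Fin q) (Fin b) ℝ}
    (hB : ∀ l, ∃ i, IsPureRow B i l) (hC : ∀ l, ∃ i, IsPureRow C i l) :
    LinearIndependent ℝ (M * (B ⊗ₖ C)ᵀ).row := by
  obtain ⟨σ, hσ⟩ := exists_submatrix_eq_one_of_isPureRow hB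
  obtain ⟨τ, hτ⟩ := exists_submatrix_eq_one_of_isPureRow hC
  have hsub : (M * (B ⊗ₖ C)ᵀ).submatrix id (Prod.map σ τ) = M := by
    have hK : (B ⊗ₖ C).submatrix (Prod.map σ τ) id = B.submatrix σ id ⊗ₖ C.submatrix τ id := rfl
    rw [submatrix_mul _ _ id id _ Function.bijective_id, ← transpose_submatrix, hK, hσ, hτ,
      one_kronecker_one, transpose_one, Matrix.mul_one, submatrix_id_id]
  rw [← hsub] at hM
  exact hM.of_comp (LinearMap.funLeft ℝ ℝ (Prod.map σ τ))

section Tucker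

variable {r₁ r₂ r₃ p₁ p₂ p₃ : ℕ} (S : Tensor3 r₁ r₂ r₃) (A : Matrix (Fin p₁) (Fin r₁) ℝ)
  (B : Matrix (Fin p₂) (Fin r₂) ℝ) (C : Matrix (Fin p₃) (Fin r₃) ℝ)

theorem mat1_tmul : mat1 (tmul S A B C) = A * mat1 S * (B ⊗ₖ C)ᵀ := by
  ext i ⟨j, k⟩
  rw [Matrix.mul_assoc]
  simp only [mat1, tmul, mul_apply, transpose_apply, kronecker_apply,
    Fintype.sum_prod_type, Finset.mul_sum]
  refine Finset.sum_congr rfl fun a _ => Finset.sum_congr rfl fun b _ =>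
    Finset.sum_congr rfl fun c _ => by ring

theorem mat2_tmul : mat2 (tmul S A B C) = B * mat2 S * (A ⊗ₖ C)ᵀ := by
  ext j ⟨i, k⟩
  rw [Matrix.mul_assoc]
  simp only [mat2, tmul, mul_apply, transpose_apply, kronecker_apply,
    Fintype.sum_prod_type, Finset.mul_sum]
  rw [Finset.sum_comm]
  refine Finset.sum_congr rfl fun a _ => Finset.sum_congr rfl fun b _ =>
    Finset.sum_congr rfl fun c _ => by ring

theorem mat3_tmul : mat3 (tmul S A B C) = C * mat3 S * (A ⊗ₖ B)ᵀ := by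
  ext k ⟨i, j⟩
  rw [Matrix.mul_assoc]
  simp only [mat3, tmul, mul_apply, transpose_apply, kronecker_apply,
    Fintype.sum_prod_type, Finset.mul_sum]
  conv_rhs => rw [Finset.sum_comm]; enter [2, a]; rw [Finset.sum_comm]
  refine Finset.sum_congr rfl fun a _ => Finset.sum_congr rfl fun b _ =>
    Finset.sum_congr rfl fun c _ => by ring

end Tucker

theorem mat1_injective {p₁ p₂ p₃ : ℕ} : Function.Injective (@mat1 p₁ p₂ p₃) :=
  fun _ _ h => funext fun i => funext fun j => funext fun k => congrFun (congrFun h i) (j, k)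

theorem tmul_tmul {r₁ r₂ r₃ q₁ q₂ q₃ p₁ p₂ p₃ : ℕ} (S : Tensor3 r₁ r₂ r₃)
    (A : Matrix (Fin q₁) (Fin r₁) ℝ) (B : Matrix (Fin q₂) (Fin r₂) ℝ)
    (C : Matrix (Fin q₃) (Fin r₃) ℝ) (A' : Matrix (Fin p₁) (Fin q₁) ℝ)
    (B' : Matrix (Fin p₂) (Fin q₂) ℝ) (C' : Matrix (Fin p₃) (Fin q₃) ℝ) :
    tmul (tmul S A B C) A' B' C' = tmul S (A' * A) (B' * B) (C' * C) := by
  apply mat1_injective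
  simp only [mat1_tmul, mul_kronecker_mul, transpose_mul, Matrix.mul_assoc]

theorem tmul_one {r₁ r₂ r₃ : ℕ} (S : Tensor3 r₁ r₂ r₃) : tmul S 1 1 1 = S := by
  apply mat1_injective
  rw [mat1_tmul, one_kronecker_one, transpose_one, Matrix.one_mul, Matrix.mul_one]

theorem tmul_left_injective_of_isPureRow {r₁ r₂ r₃ p₁ p₂ p₃ : ℕ}
    {A : Matrix (Fin p₁) (Fin r₁) ℝ} {B : Matrix (Fin p₂) (Fin r₂) ℝ}
    {C : Matrix (Fin p₃) (Fin r₃) ℝ} (hA : ∀ l, ∃ i, IsPureRow A i l)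
    (hB : ∀ l, ∃ i, IsPureRow B i l) (hC : ∀ l, ∃ i, IsPureRow C i l) :
    Function.Injective fun X : Tensor3 r₁ r₂ r₃ => tmul X A B C := by
  obtain ⟨σ₁, hσ₁⟩ := exists_submatrix_eq_one_of_isPureRow hA
  obtain ⟨σ₂, hσ₂⟩ := exists_submatrix_eq_one_of_isPureRow hB
  obtain ⟨σ₃, hσ₃⟩ := exists_submatrix_eq_one_of_isPureRow hC
  intro X Y (h : tmul X A B C = tmul Y A B C)
  have hrestrict : ∀ Z : Tensor3 r₁ r₂ r₃,
      (fun a b c => tmul Z A B C (σ₁ a) (σ₂ b) (σ₃ c)) = Z := fun Z => by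
    change tmul Z (A.submatrix σ₁ id) (B.submatrix σ₂ id) (C.submatrix σ₃ id) = Z
    rw [hσ₁, hσ₂, hσ₃, tmul_one]
  rw [← hrestrict X, ← hrestrict Y, h]

theorem stmt0_general {p₁ p₂ p₃ r₁ r₂ r₃ : ℕ}
    (S S' : Tensor3 r₁ r₂ r₃)
    (P1 : Matrix (Fin p₁) (Fin r₁) ℝ) (P2 : Matrix (Fin p₂) (Fin r₂) ℝ)
    (P3 : Matrix (Fin p₃) (Fin r₃) ℝ)
    (Q1 : Matrix (Fin p₁) (Fin r₁) ℝ) (Q2 : Matrix (Fin p₂) (Fin r₂) ℝ)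
    (Q3 : Matrix (Fin p₃) (Fin r₃) ℝ)
    (hm1 : IsMembership P1) (hm2 : IsMembership P2) (hm3 : IsMembership P3)
    (hS1 : (mat1 S).rank = r₁) (hS2 : (mat2 S).rank = r₂) (hS3 : (mat3 S).rank = r₃)
    (hp1 : ∀ l, ∃ i, IsPureRow P1 i l) (hp2 : ∀ l, ∃ i, IsPureRow P2 i l)
    (hp3 : ∀ l, ∃ i, IsPureRow P3 i l)
    (hm1' : IsMembership Q1) (hm2' : IsMembership Q2) (hm3' : IsMembership Q3)
    (hS1' : (mat1 S').rank = r₁) (hS2' : (mat2 S').rank = r₂) (hS3' : (mat3 S').rank = r₃)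
    (hp1' : ∀ l, ∃ i, IsPureRow Q1 i l) (hp2' : ∀ l, ∃ i, IsPureRow Q2 i l)
    (hp3' : ∀ l, ∃ i, IsPureRow Q3 i l)
    (heq : tmul S' Q1 Q2 Q3 = tmul S P1 P2 P3) :
    ∃ (R1 : Matrix (Fin r₁) (Fin r₁) ℝ) (R2 : Matrix (Fin r₂) (Fin r₂) ℝ)
      (R3 : Matrix (Fin r₃) (Fin r₃) ℝ),
      IsPermMatrix R1 ∧ IsPermMatrix R2 ∧ IsPermMatrix R3 ∧
      Q1 = P1 * R1 ∧ Q2 = P2 * R2 ∧ Q3 = P3 * R3 ∧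
      S' = tmul S R1ᵀ R2ᵀ R3ᵀ := by
  have hrow {m : ℕ} {n : Type} [Fintype n] {M : Matrix (Fin m) n ℝ} (h : M.rank = m) :=
    linearIndependent_row_of_rank_eq_card (h.trans (Fintype.card_fin m).symm)
  obtain ⟨R1, hR1, rfl⟩ := exists_isPermMatrix_eq_mul_of_mul_eq_mul hm1 hm1' hp1 hp1'
    (linearIndependent_row_mul_kronecker_transpose (hrow hS1) hp2 hp3)
    (linearIndependent_row_mul_kronecker_transpose (hrow hS1') hp2' hp3')
    (by simpa only [mat1_tmul, Matrix.mul_assoc] using congrArg mat1 heq)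
  obtain ⟨R2, hR2, rfl⟩ := exists_isPermMatrix_eq_mul_of_mul_eq_mul hm2 hm2' hp2 hp2'
    (linearIndependent_row_mul_kronecker_transpose (hrow hS2) hp1 hp3)
    (linearIndependent_row_mul_kronecker_transpose (hrow hS2') hp1' hp3')
    (by simpa only [mat2_tmul, Matrix.mul_assoc] using congrArg mat2 heq)
  obtain ⟨R3, hR3, rfl⟩ := exists_isPermMatrix_eq_mul_of_mul_eq_mul hm3 hm3' hp3 hp3'
    (linearIndependent_row_mul_kronecker_transpose (hrow hS3) hp1 hp2)
    (linearIndependent_row_mul_kronecker_transpose (hrow hS3') hp1' hp2')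
    (by simpa only [mat3_tmul, Matrix.mul_assoc] using congrArg mat3 heq)
  have hS : tmul S' R1 R2 R3 = S :=
    tmul_left_injective_of_isPureRow hp1 hp2 hp3 (by simpa only [tmul_tmul] using heq)
  refine ⟨R1, R2, R3, hR1, hR2, hR3, rfl, rfl, rfl, ?_⟩
  rw [← hS, tmul_tmul, hR1.transpose_mul_self, hR2.transpose_mul_self, hR3.transpose_mul_self,
    tmul_one]

theorem stmt0 {p₁ p₂ p₃ r₁ r₂ r₃ : ℕ}
    (S S' : Tensor3 r₁ r₂ r₃)
    (P1 : Matrix (Fin p₁) (Fin r₁) ℝ) (P2 : Matrix (Fin p₂) (Fin r₂) ℝ)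
    (P3 : Matrix (Fin p₃) (Fin r₃) ℝ)
    (Q1 : Matrix (Fin p₁) (Fin r₁) ℝ) (Q2 : Matrix (Fin p₂) (Fin r₂) ℝ)
    (Q3 : Matrix (Fin p₃) (Fin r₃) ℝ)
    (hm1 : IsMembership P1) (hm2 : IsMembership P2) (hm3 : IsMembership P3)
    (hr1 : r₁ ≤ r₂ * r₃) (hr2 : r₂ ≤ r₁ * r₃) (hr3 : r₃ ≤ r₁ * r₂)
    (hS1 : (mat1 S).rank = r₁) (hS2 : (mat2 S).rank = r₂) (hS3 : (mat3 S).rank = r₃)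
    (hp1 : ∀ l, ∃ i, IsPureRow P1 i l) (hp2 : ∀ l, ∃ i, IsPureRow P2 i l)
    (hp3 : ∀ l, ∃ i, IsPureRow P3 i l)
    (hm1' : IsMembership Q1) (hm2' : IsMembership Q2) (hm3' : IsMembership Q3)
    (hS1' : (mat1 S').rank = r₁) (hS2' : (mat2 S').rank = r₂) (hS3' : (mat3 S').rank = r₃)
    (hp1' : ∀ l, ∃ i, IsPureRow Q1 i l) (hp2' : ∀ l, ∃ i, IsPureRow Q2 i l)
    (hp3' : ∀ l, ∃ i, IsPureRow Q3 i l)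
    (heq : tmul S' Q1 Q2 Q3 = tmul S P1 P2 P3) :
    ∃ (R1 : Matrix (Fin r₁) (Fin r₁) ℝ) (R2 : Matrix (Fin r₂) (Fin r₂) ℝ)
      (R3 : Matrix (Fin r₃) (Fin r₃) ℝ),
      IsPermMatrix R1 ∧ IsPermMatrix R2 ∧ IsPermMatrix R3 ∧
      Q1 = P1 * R1 ∧ Q2 = P2 * R2 ∧ Q3 = P3 * R3 ∧
      S' = tmul S R1ᵀ R2ᵀ R3ᵀ :=
  stmt0_general S S' P1 P2 P3 Q1 Q2 Q3 hm1 hm2 hm3 hS1 hS2 hS3 hp1 hp2 hp3 hm1' hm2' hm3' hS1' hS2'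
    hS3' hp1' hp2' hp3' heq

end
end

section
/- Let T = S ×₁Π₁ ×₂Π₂ ×₃Π₃ be a tensor mixed-membership blockmodel such that for every k: r_k ≤ ∏_{j≠k} r_j, M_k(S) has rank r_k, every community of every mode has a pure node, and c·p_k/r_k ≤ λ_min(Π_kᵀΠ_k) ≤ λ_max(Π_kᵀΠ_k) ≤ C·p_k/r_k for constants 0 < c ≤ C. Set λ := min_k σ_{r_k}(M_k(T)) and Δ := min_k σ_{r_k}(M_k(S)). Then there exist constants c', C' > 0 depending only on c and C such that c'·Δ·√(p₁p₂p₃/(r₁r₂r₃)) ≤ λ ≤ C'·Δ·√(p₁p₂p₃/(r₁r₂r₃)). -/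
open Matrix
open scoped BigOperators Kronecker

noncomputable section

/-- Euclidean norm of a finitely-indexed real vector. -/
def enorm2 {n : Type*} [Fintype n] (v : n → ℝ) : ℝ := Real.sqrt (∑ i, (v i) ^ 2)

/-- `j`-th largest singular value (for `j ≥ 1`), via the Courant–Fischer principle. -/
def sval {m n : Type*} [Fintype m] [Fintype n] (M : Matrix m n ℝ) (j : ℕ) : ℝ :=
  sSup {c | 0 ≤ c ∧ ∃ V : Submodule ℝ (n → ℝ), Module.finrank ℝ V = j ∧
      ∀ v ∈ V, c * enorm2 v ≤ enorm2 (M.mulVec v)}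

/-- Smallest eigenvalue of a symmetric matrix, via the Rayleigh quotient. -/
def eigMin {n : Type*} [Fintype n] (A : Matrix n n ℝ) : ℝ :=
  sInf {c | ∃ v : n → ℝ, enorm2 v = 1 ∧ c = v ⬝ᵥ A.mulVec v}

/-- Largest eigenvalue of a symmetric matrix, via the Rayleigh quotient. -/
def eigMax {n : Type*} [Fintype n] (A : Matrix n n ℝ) : ℝ :=
  sSup {c | ∃ v : n → ℝ, enorm2 v = 1 ∧ c = v ⬝ᵥ A.mulVec v}


/-!
Each unfolding of the blockmodel factors as `M₁(T) = Π₁ M₁(S) (Π₂ ⊗ Π₃)ᵀ` (and likewise for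
modes 2 and 3). The eigenvalue bounds on `Π_kᵀ Π_k` say that `Π_k` stretches every vector by a
factor between `√(c p_k / r_k)` and `√(C p_k / r_k)`; such two-sided stretch bounds multiply under
Kronecker products. By the Courant–Fischer characterisation, multiplying a matrix on the left by
such a factor, or on the right by its transpose, multiplies every singular value by a number in the
same range. So `σ_{r_k}(M_k(T))` lies between `c^{3/2}` and `C^{3/2}` times
`√(p₁p₂p₃/(r₁r₂r₃)) · σ_{r_k}(M_k(S))`, and the minimum over `k` inherits these bounds. Pure nodes
force `r_k ≤ p_k`, which keeps the stretch factors positive.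
-/

namespace TuckerBlockmodel

section Norm

variable {m n : Type*} [Fintype m] [Fintype n]

lemma enorm2_eq_norm (v : n → ℝ) :
    enorm2 v = ‖(WithLp.toLp 2 v : EuclideanSpace ℝ n)‖ := by
  simp [enorm2, EuclideanSpace.norm_eq]

lemma enorm2_nonneg (v : n → ℝ) : 0 ≤ enorm2 v := Real.sqrt_nonneg _

lemma enorm2_eq_zero {v : n → ℝ} : enorm2 v = 0 ↔ v = 0 := by
  simp [enorm2_eq_norm]

lemma enorm2_zero : enorm2 (0 : n → ℝ) = 0 := enorm2_eq_zero.mpr rfl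

lemma enorm2_smul (t : ℝ) (v : n → ℝ) : enorm2 (t • v) = |t| * enorm2 v := by
  simp [enorm2_eq_norm, WithLp.toLp_smul, norm_smul]

lemma enorm2_sq (v : n → ℝ) : enorm2 v ^ 2 = ∑ i, v i ^ 2 :=
  Real.sq_sqrt (Finset.sum_nonneg fun _ _ => sq_nonneg _)

lemma dotProduct_le_enorm2_mul (v w : n → ℝ) : v ⬝ᵥ w ≤ enorm2 v * enorm2 w := by
  simpa [enorm2_eq_norm, EuclideanSpace.inner_eq_star_dotProduct, dotProduct_comm] using
    real_inner_le_norm (WithLp.toLp 2 v : EuclideanSpace ℝ n) (WithLp.toLp 2 w)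

lemma exists_enorm2_mulVec_le (M : Matrix m n ℝ) :
    ∃ K, ∀ v, enorm2 (M *ᵥ v) ≤ K * enorm2 v := by
  classical
  let L := LinearMap.toContinuousLinearMap (toEuclideanLin M)
  refine ⟨‖L‖, fun v => ?_⟩
  simpa [enorm2_eq_norm, L, toLpLin_toLp] using L.le_opNorm (WithLp.toLp 2 v)

lemma enorm2_mulVec_sq (B : Matrix m n ℝ) (v : n → ℝ) :
    enorm2 (B *ᵥ v) ^ 2 = v ⬝ᵥ (Bᵀ *ᵥ (B *ᵥ v)) := by
  rw [dotProduct_mulVec, vecMul_transpose, enorm2_sq]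
  simp [dotProduct, sq]

lemma enorm2_transpose_mulVec_le {B : Matrix m n ℝ} {b : ℝ} (hb : 0 ≤ b)
    (hB : ∀ v, enorm2 (B *ᵥ v) ≤ b * enorm2 v) (w : m → ℝ) :
    enorm2 (Bᵀ *ᵥ w) ≤ b * enorm2 w := by
  have hsq : enorm2 (Bᵀ *ᵥ w) ^ 2 ≤ enorm2 w * (b * enorm2 (Bᵀ *ᵥ w)) := by
    rw [enorm2_mulVec_sq, transpose_transpose]
    exact (dotProduct_le_enorm2_mul _ _).trans
      (mul_le_mul_of_nonneg_left (hB _) (enorm2_nonneg w))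
  nlinarith [mul_nonneg hb (enorm2_nonneg w)]

lemma mul_enorm2_mulVec_le_enorm2_transpose_mulVec {B : Matrix m n ℝ} {a : ℝ} (ha : 0 ≤ a)
    (hB : ∀ v, a * enorm2 v ≤ enorm2 (B *ᵥ v)) (z : n → ℝ) :
    a * enorm2 (B *ᵥ z) ≤ enorm2 (Bᵀ *ᵥ (B *ᵥ z)) := by
  have hsq : enorm2 (B *ᵥ z) ^ 2 ≤ enorm2 z * enorm2 (Bᵀ *ᵥ (B *ᵥ z)) := by
    rw [enorm2_mulVec_sq]; exact dotProduct_le_enorm2_mul _ _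
  rcases (enorm2_nonneg (B *ᵥ z)).eq_or_lt with h0 | hpos
  · rw [← h0, mul_zero]; exact enorm2_nonneg _
  · nlinarith [mul_le_mul_of_nonneg_right (hB z) (enorm2_nonneg (Bᵀ *ᵥ (B *ᵥ z))),
      mul_le_mul_of_nonneg_left hsq ha]

end Norm

section SingularValue

variable {m n m' n' q : Type*} [Fintype m] [Fintype n] [Fintype m'] [Fintype n'] [Fintype q]

def svSet (M : Matrix m n ℝ) (j : ℕ) : Set ℝ :=
  {c | 0 ≤ c ∧ ∃ V : Submodule ℝ (n → ℝ), Module.finrank ℝ V = j ∧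
      ∀ v ∈ V, c * enorm2 v ≤ enorm2 (M *ᵥ v)}

lemma sval_eq_sSup (M : Matrix m n ℝ) (j : ℕ) : sval M j = sSup (svSet M j) := rfl

lemma sval_nonneg (M : Matrix m n ℝ) (j : ℕ) : 0 ≤ sval M j :=
  Real.sSup_nonneg fun _ hc => hc.1

lemma sval_zero (M : Matrix m n ℝ) : sval M 0 = 0 := by
  have hset : svSet M 0 = Set.Ici 0 := by
    ext c
    refine ⟨fun hc => hc.1, fun hc => ⟨hc, ⊥, finrank_bot ℝ _, fun v hv => ?_⟩⟩
    simp [(Submodule.mem_bot ℝ).mp hv, enorm2_zero]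
  rw [sval_eq_sSup, hset, Real.sSup_of_not_bddAbove (not_bddAbove_Ici 0)]

lemma le_sval {M : Matrix m n ℝ} {j : ℕ} (hj : j ≠ 0) {c : ℝ} (hc : c ∈ svSet M j) :
    c ≤ sval M j := by
  obtain ⟨K, hK⟩ := exists_enorm2_mulVec_le M
  refine le_csSup ⟨K, fun c' ⟨_, V, hV, hc'V⟩ => ?_⟩ hc
  have hVne : V ≠ ⊥ := fun h => by rw [h, finrank_bot] at hV; exact hj hV.symm
  obtain ⟨v, hvV, hv0⟩ := Submodule.exists_mem_ne_zero_of_ne_bot hVne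
  have hpos : 0 < enorm2 v := (enorm2_nonneg v).lt_of_ne' (enorm2_eq_zero.not.mpr hv0)
  exact le_of_mul_le_mul_right ((hc'V v hvV).trans (hK v)) hpos

/-- `φ` pushes every Courant–Fischer subspace of `M'` forward to one of `M`. -/
theorem mul_mul_sval_le_sval_of_map {M : Matrix m n ℝ} {M' : Matrix m' n' ℝ}
    (φ : (n' → ℝ) →ₗ[ℝ] (n → ℝ)) {α β : ℝ} (hα : 0 ≤ α) (hβ : 0 < β)
    (hφ : ∀ x, α * enorm2 (φ x) ≤ enorm2 x)
    (hM : ∀ x, β * enorm2 (M' *ᵥ x) ≤ enorm2 (M *ᵥ φ x)) (j : ℕ) :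
    α * β * sval M' j ≤ sval M j := by
  obtain rfl | hj := eq_or_ne j 0
  · simp [sval_zero]
  rw [sval_eq_sSup M', ← smul_eq_mul, ← Real.sSup_smul_of_nonneg (by positivity)]
  refine Real.sSup_le ?_ (sval_nonneg M j)
  rintro _ ⟨c, ⟨hc0, V, hV, hcV⟩, rfl⟩
  rcases hc0.eq_or_lt with rfl | hc
  · simpa using sval_nonneg M j
  have hinj : Function.Injective (φ ∘ₗ V.subtype) := by
    refine (injective_iff_map_eq_zero _).mpr fun x hx => ?_
    have hφx : φ x = 0 := hx
    have hMx : β * enorm2 (M' *ᵥ x) ≤ 0 := by simpa [hφx, enorm2_zero] using hM x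
    have hM'x : enorm2 (M' *ᵥ x) ≤ 0 := by nlinarith
    have hx0 : enorm2 (x : n' → ℝ) = 0 := by
      nlinarith [hcV x x.2, enorm2_nonneg (x : n' → ℝ)]
    exact Subtype.ext (enorm2_eq_zero.mp hx0)
  refine le_sval hj ⟨by positivity, V.map φ, ?_, ?_⟩
  · rw [← hV, ← LinearMap.finrank_range_of_inj hinj, LinearMap.range_comp,
      Submodule.range_subtype]
  · rintro _ ⟨x, hx, rfl⟩
    calc α * β * c * enorm2 (φ x) = β * c * (α * enorm2 (φ x)) := by ring
      _ ≤ β * c * enorm2 x := by gcongr; exact hφ x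
      _ = β * (c * enorm2 x) := by ring
      _ ≤ β * enorm2 (M' *ᵥ x) := by gcongr; exact hcV x hx
      _ ≤ enorm2 (M *ᵥ φ x) := hM x

theorem mul_sval_le_sval_mul {A : Matrix q m ℝ} {a : ℝ} (ha : 0 < a)
    (hA : ∀ v, a * enorm2 v ≤ enorm2 (A *ᵥ v)) (N : Matrix m n ℝ) (j : ℕ) :
    a * sval N j ≤ sval (A * N) j := by
  simpa using mul_mul_sval_le_sval_of_map (M := A * N) (M' := N) LinearMap.id zero_le_one ha
    (by simp) (fun x => by simpa [mulVec_mulVec] using hA (N *ᵥ x)) j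

theorem sval_mul_le {A : Matrix q m ℝ} {b : ℝ} (hb : 0 < b)
    (hA : ∀ v, enorm2 (A *ᵥ v) ≤ b * enorm2 v) (N : Matrix m n ℝ) (j : ℕ) :
    sval (A * N) j ≤ b * sval N j := by
  have := mul_mul_sval_le_sval_of_map (M := N) (M' := A * N) LinearMap.id zero_le_one
    (inv_pos.2 hb) (by simp)
    (fun x => by rw [← mulVec_mulVec, inv_mul_le_iff₀ hb]; exact hA _) j
  rwa [one_mul, inv_mul_le_iff₀ hb] at this

theorem sval_mul_transpose_le {B : Matrix q n ℝ} {b : ℝ} (hb : 0 < b)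
    (hB : ∀ v, enorm2 (B *ᵥ v) ≤ b * enorm2 v) (N : Matrix m n ℝ) (j : ℕ) :
    sval (N * Bᵀ) j ≤ b * sval N j := by
  have := mul_mul_sval_le_sval_of_map (M := N) (M' := N * Bᵀ) (mulVecLin Bᵀ)
    (inv_pos.2 hb).le one_pos
    (fun x => by rw [inv_mul_le_iff₀ hb]; exact enorm2_transpose_mulVec_le hb.le hB x)
    (fun x => by rw [one_mul, mulVecLin_apply, mulVec_mulVec]) j
  rwa [mul_one, inv_mul_le_iff₀ hb] at this

theorem mul_sval_le_sval_mul_transpose {B : Matrix q n ℝ} {a : ℝ} (ha : 0 < a)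
    (hB : ∀ v, a * enorm2 v ≤ enorm2 (B *ᵥ v)) (N : Matrix m n ℝ) (j : ℕ) :
    a * sval N j ≤ sval (N * Bᵀ) j := by
  classical
  have hinj : Function.Injective (Bᵀ * B).mulVec := by
    refine (injective_iff_map_eq_zero (mulVecLin (Bᵀ * B))).mpr fun z hz => ?_
    have hBz := mul_enorm2_mulVec_le_enorm2_transpose_mulVec ha.le hB z
    rw [mulVec_mulVec, ← mulVecLin_apply (Bᵀ * B), hz, enorm2_zero] at hBz
    have hBz0 : enorm2 (B *ᵥ z) ≤ 0 := by nlinarith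
    have hz0 : enorm2 z ≤ 0 := by nlinarith [hB z]
    exact enorm2_eq_zero.mp (le_antisymm hz0 (enorm2_nonneg z))
  have hG : Bᵀ * B * (Bᵀ * B)⁻¹ = 1 :=
    mul_nonsing_inv _ ((isUnit_iff_isUnit_det _).mp (mulVec_injective_iff_isUnit.mp hinj))
  -- `B (BᵀB)⁻¹` is a right inverse of `Bᵀ` of operator norm at most `1 / a`.
  have := mul_mul_sval_le_sval_of_map (M := N * Bᵀ) (M' := N)
    (mulVecLin (B * (Bᵀ * B)⁻¹)) ha.le one_pos
    (fun x => by
      simpa [mulVec_mulVec, ← Matrix.mul_assoc, hG] using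
        mul_enorm2_mulVec_le_enorm2_transpose_mulVec ha.le hB ((Bᵀ * B)⁻¹ *ᵥ x))
    (fun x => by simp [mulVec_mulVec, Matrix.mul_assoc, ← Matrix.mul_assoc Bᵀ, hG]) j
  simpa using this

end SingularValue

section StretchBounds

lemma transpose_mul_apply_eq_mulVec {m n k : Type*} [Fintype n] (A : Matrix m n ℝ)
    (X : Matrix n k ℝ) (j : k) : (A * X)ᵀ j = A *ᵥ Xᵀ j := by
  ext i
  simp [mul_apply, mulVec, dotProduct]

variable {m n m' n' k : Type*} [Fintype m] [Fintype n] [Fintype m'] [Fintype n'] [Fintype k]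

structure HasStretchBounds (A : Matrix m n ℝ) (a b : ℝ) : Prop where
  pos : 0 < a
  le : a ≤ b
  lower : ∀ v, a * enorm2 v ≤ enorm2 (A *ᵥ v)
  upper : ∀ v, enorm2 (A *ᵥ v) ≤ b * enorm2 v

lemma enorm2_vec_sq (X : Matrix m n ℝ) : enorm2 (vec X) ^ 2 = ∑ j, enorm2 (Xᵀ j) ^ 2 := by
  simp only [enorm2_sq, vec, transpose_apply, Fintype.sum_prod_type]

lemma enorm2_vec_transpose (X : Matrix m n ℝ) : enorm2 (vec Xᵀ) = enorm2 (vec X) := by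
  rw [vec_transpose, enorm2, enorm2]
  congr 1
  exact Equiv.sum_comp (Equiv.prodComm _ _) fun p => vec X p ^ 2

namespace HasStretchBounds

variable {A : Matrix m n ℝ} {a b : ℝ}

lemma upper_pos (hA : HasStretchBounds A a b) : 0 < b := hA.pos.trans_le hA.le

lemma enorm2_vec_mul (hA : HasStretchBounds A a b) (X : Matrix n k ℝ) :
    a * enorm2 (vec X) ≤ enorm2 (vec (A * X)) ∧
      enorm2 (vec (A * X)) ≤ b * enorm2 (vec X) := by
  have hsq (s : ℝ) : (s * enorm2 (vec X)) ^ 2 = ∑ j, (s * enorm2 (Xᵀ j)) ^ 2 := by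
    simp only [mul_pow, enorm2_vec_sq, Finset.mul_sum]
  have hAX : enorm2 (vec (A * X)) ^ 2 = ∑ j, enorm2 (A *ᵥ Xᵀ j) ^ 2 := by
    rw [enorm2_vec_sq]; simp only [transpose_mul_apply_eq_mulVec]
  constructor
  · refine le_of_pow_le_pow_left₀ two_ne_zero (enorm2_nonneg _) ?_
    rw [hsq, hAX]
    exact Finset.sum_le_sum fun j _ =>
      pow_le_pow_left₀ (mul_nonneg hA.pos.le (enorm2_nonneg _)) (hA.lower _) 2
  · refine le_of_pow_le_pow_left₀ two_ne_zero (mul_nonneg hA.upper_pos.le (enorm2_nonneg _)) ?_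
    rw [hsq, hAX]
    exact Finset.sum_le_sum fun j _ => pow_le_pow_left₀ (enorm2_nonneg _) (hA.upper _) 2

lemma kronecker {B : Matrix m' n' ℝ} {a' b' : ℝ} (hA : HasStretchBounds A a b)
    (hB : HasStretchBounds B a' b') : HasStretchBounds (A ⊗ₖ B) (a * a') (b * b') := by
  -- `(A ⊗ₖ B) *ᵥ vec X = vec (B * (X * Aᵀ))`, and `X * Aᵀ` is the transpose of `A * Xᵀ`.
  have factor (v : n × n' → ℝ) : ∃ y, (a * enorm2 v ≤ y ∧ y ≤ b * enorm2 v) ∧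
      a' * y ≤ enorm2 ((A ⊗ₖ B) *ᵥ v) ∧ enorm2 ((A ⊗ₖ B) *ᵥ v) ≤ b' * y := by
    let X : Matrix n' n ℝ := of fun y x => v (x, y)
    have hv : (A ⊗ₖ B) *ᵥ v = vec (B * (X * Aᵀ)) := by
      rw [← Matrix.mul_assoc, ← kronecker_mulVec_vec]; rfl
    have hXA : enorm2 (vec (X * Aᵀ)) = enorm2 (vec (A * Xᵀ)) := by
      rw [← enorm2_vec_transpose, transpose_mul, transpose_transpose]
    have hX : enorm2 (vec Xᵀ) = enorm2 v := by rw [enorm2_vec_transpose]; rfl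
    refine ⟨enorm2 (vec (A * Xᵀ)), ?_, ?_⟩
    · rw [← hX]; exact hA.enorm2_vec_mul Xᵀ
    · rw [hv, ← hXA]; exact hB.enorm2_vec_mul (X * Aᵀ)
  refine ⟨mul_pos hA.pos hB.pos, mul_le_mul hA.le hB.le hB.pos.le hA.upper_pos.le,
    fun v => ?_, fun v => ?_⟩
  · obtain ⟨y, ⟨hy, -⟩, hAB, -⟩ := factor v
    calc a * a' * enorm2 v = a' * (a * enorm2 v) := by ring
      _ ≤ a' * y := by gcongr; exact hB.pos.le
      _ ≤ _ := hAB
  · obtain ⟨y, ⟨-, hy⟩, -, hAB⟩ := factor v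
    calc enorm2 ((A ⊗ₖ B) *ᵥ v) ≤ b' * y := hAB
      _ ≤ b' * (b * enorm2 v) := by gcongr; exact hB.upper_pos.le
      _ = b * b' * enorm2 v := by ring

end HasStretchBounds

end StretchBounds

section Rayleigh

variable {m n : Type*} [Fintype m] [Fintype n]

def rayleighSet (A : Matrix n n ℝ) : Set ℝ :=
  {c | ∃ v : n → ℝ, enorm2 v = 1 ∧ c = v ⬝ᵥ A.mulVec v}

lemma dotProduct_gram_mulVec (P : Matrix m n ℝ) (v : n → ℝ) :
    v ⬝ᵥ (Pᵀ * P) *ᵥ v = enorm2 (P *ᵥ v) ^ 2 := by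
  rw [enorm2_mulVec_sq, mulVec_mulVec]

lemma div_sq_mem_rayleighSet_gram (P : Matrix m n ℝ) {v : n → ℝ} (hv : v ≠ 0) :
    (enorm2 (P *ᵥ v) / enorm2 v) ^ 2 ∈ rayleighSet (Pᵀ * P) := by
  have hpos : 0 < enorm2 v := (enorm2_nonneg v).lt_of_ne' (enorm2_eq_zero.not.mpr hv)
  refine ⟨(enorm2 v)⁻¹ • v, ?_, ?_⟩
  · rw [enorm2_smul, abs_inv, abs_of_pos hpos, inv_mul_cancel₀ hpos.ne']
  · rw [dotProduct_gram_mulVec, mulVec_smul, enorm2_smul, abs_inv, abs_of_pos hpos,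
      inv_mul_eq_div]

lemma bddBelow_rayleighSet_gram (P : Matrix m n ℝ) : BddBelow (rayleighSet (Pᵀ * P)) :=
  ⟨0, by rintro _ ⟨v, -, rfl⟩; rw [dotProduct_gram_mulVec]; positivity⟩

lemma bddAbove_rayleighSet_gram (P : Matrix m n ℝ) : BddAbove (rayleighSet (Pᵀ * P)) := by
  obtain ⟨K, hK⟩ := exists_enorm2_mulVec_le P
  refine ⟨K ^ 2, ?_⟩
  rintro _ ⟨v, hv, rfl⟩
  rw [dotProduct_gram_mulVec]
  exact pow_le_pow_left₀ (enorm2_nonneg _) (by simpa [hv] using hK v) 2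

lemma sqrt_mul_enorm2_le_of_le_eigMin {P : Matrix m n ℝ} {t : ℝ} (h : t ≤ eigMin (Pᵀ * P))
    (v : n → ℝ) : √t * enorm2 v ≤ enorm2 (P *ᵥ v) := by
  obtain rfl | hv := eq_or_ne v 0
  · simp [enorm2_zero]
  have hpos : 0 < enorm2 v := (enorm2_nonneg v).lt_of_ne' (enorm2_eq_zero.not.mpr hv)
  have hq : t ≤ (enorm2 (P *ᵥ v) / enorm2 v) ^ 2 :=
    h.trans (csInf_le (bddBelow_rayleighSet_gram P) (div_sq_mem_rayleighSet_gram P hv))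
  rw [← le_div_iff₀ hpos]
  calc √t ≤ √((enorm2 (P *ᵥ v) / enorm2 v) ^ 2) := Real.sqrt_le_sqrt hq
    _ = _ := Real.sqrt_sq (div_nonneg (enorm2_nonneg _) hpos.le)

lemma enorm2_mulVec_le_sqrt_mul_of_eigMax_le {P : Matrix m n ℝ} {t : ℝ}
    (h : eigMax (Pᵀ * P) ≤ t) (v : n → ℝ) : enorm2 (P *ᵥ v) ≤ √t * enorm2 v := by
  obtain rfl | hv := eq_or_ne v 0
  · simp [enorm2_zero]
  have hpos : 0 < enorm2 v := (enorm2_nonneg v).lt_of_ne' (enorm2_eq_zero.not.mpr hv)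
  have hq : (enorm2 (P *ᵥ v) / enorm2 v) ^ 2 ≤ t :=
    (le_csSup (bddAbove_rayleighSet_gram P) (div_sq_mem_rayleighSet_gram P hv)).trans h
  rw [← div_le_iff₀ hpos]
  exact Real.le_sqrt_of_sq_le hq

lemma HasStretchBounds.of_eigMin_eigMax {P : Matrix m n ℝ} {t u : ℝ} (ht : 0 < t)
    (htu : t ≤ u) (hmin : t ≤ eigMin (Pᵀ * P)) (hmax : eigMax (Pᵀ * P) ≤ u) :
    HasStretchBounds P √t √u :=
  ⟨Real.sqrt_pos.mpr ht, Real.sqrt_le_sqrt htu, sqrt_mul_enorm2_le_of_le_eigMin hmin,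
    enorm2_mulVec_le_sqrt_mul_of_eigMax_le hmax⟩

end Rayleigh

theorem HasStretchBounds.sval_mul_mul_kronecker_transpose {m n m' n' m'' n'' : Type*}
    [Fintype m] [Fintype n] [Fintype m'] [Fintype n'] [Fintype m''] [Fintype n'']
    {A : Matrix m n ℝ} {B : Matrix m' n' ℝ} {C : Matrix m'' n'' ℝ} {a b a' b' a'' b'' : ℝ}
    (hA : HasStretchBounds A a b) (hB : HasStretchBounds B a' b')
    (hC : HasStretchBounds C a'' b'') (N : Matrix n (n' × n'') ℝ) (j : ℕ) :
    a * (a' * a'') * sval N j ≤ sval (A * (N * (B ⊗ₖ C)ᵀ)) j ∧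
      sval (A * (N * (B ⊗ₖ C)ᵀ)) j ≤ b * (b' * b'') * sval N j := by
  have hBC := hB.kronecker hC
  constructor
  · calc a * (a' * a'') * sval N j = a * ((a' * a'') * sval N j) := mul_assoc _ _ _
      _ ≤ a * sval (N * (B ⊗ₖ C)ᵀ) j := by
          gcongr
          · exact hA.pos.le
          · exact mul_sval_le_sval_mul_transpose hBC.pos hBC.lower N j
      _ ≤ _ := mul_sval_le_sval_mul hA.pos hA.lower _ j
  · calc sval (A * (N * (B ⊗ₖ C)ᵀ)) j ≤ b * sval (N * (B ⊗ₖ C)ᵀ) j :=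
          sval_mul_le hA.upper_pos hA.upper _ j
      _ ≤ b * ((b' * b'') * sval N j) := by
          gcongr
          · exact hA.upper_pos.le
          · exact sval_mul_transpose_le hBC.upper_pos hBC.upper N j
      _ = b * (b' * b'') * sval N j := (mul_assoc _ _ _).symm

section Tensor

variable {r₁ r₂ r₃ p₁ p₂ p₃ : ℕ}

lemma mat1_tmul (S : Tensor3 r₁ r₂ r₃) (P1 : Matrix (Fin p₁) (Fin r₁) ℝ)
    (P2 : Matrix (Fin p₂) (Fin r₂) ℝ) (P3 : Matrix (Fin p₃) (Fin r₃) ℝ) :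
    mat1 (tmul S P1 P2 P3) = P1 * (mat1 S * (P2 ⊗ₖ P3)ᵀ) := by
  ext i ⟨j, k⟩
  simp only [mat1, tmul, mul_apply, transpose_apply, kroneckerMap_apply, Fintype.sum_prod_type,
    Finset.mul_sum]
  exact Finset.sum_congr rfl fun a _ => Finset.sum_congr rfl fun b _ =>
    Finset.sum_congr rfl fun c _ => by ring

lemma mat2_tmul (S : Tensor3 r₁ r₂ r₃) (P1 : Matrix (Fin p₁) (Fin r₁) ℝ)
    (P2 : Matrix (Fin p₂) (Fin r₂) ℝ) (P3 : Matrix (Fin p₃) (Fin r₃) ℝ) :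
    mat2 (tmul S P1 P2 P3) = P2 * (mat2 S * (P1 ⊗ₖ P3)ᵀ) := by
  ext j ⟨i, k⟩
  simp only [mat2, tmul, mul_apply, transpose_apply, kroneckerMap_apply, Fintype.sum_prod_type,
    Finset.mul_sum]
  rw [Finset.sum_comm]
  exact Finset.sum_congr rfl fun b _ => Finset.sum_congr rfl fun a _ =>
    Finset.sum_congr rfl fun c _ => by ring

lemma mat3_tmul (S : Tensor3 r₁ r₂ r₃) (P1 : Matrix (Fin p₁) (Fin r₁) ℝ)
    (P2 : Matrix (Fin p₂) (Fin r₂) ℝ) (P3 : Matrix (Fin p₃) (Fin r₃) ℝ) :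
    mat3 (tmul S P1 P2 P3) = P3 * (mat3 S * (P1 ⊗ₖ P2)ᵀ) := by
  ext k ⟨i, j⟩
  simp only [mat3, tmul, mul_apply, transpose_apply, kroneckerMap_apply, Fintype.sum_prod_type,
    Finset.mul_sum]
  refine ((Finset.sum_congr rfl fun a _ => Finset.sum_comm).trans Finset.sum_comm).trans ?_
  exact Finset.sum_congr rfl fun c _ => Finset.sum_congr rfl fun a _ =>
    Finset.sum_congr rfl fun b _ => by ring

def minModeSval (T : Tensor3 p₁ p₂ p₃) (j₁ j₂ j₃ : ℕ) : ℝ :=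
  min (min (sval (mat1 T) j₁) (sval (mat2 T) j₂)) (sval (mat3 T) j₃)

theorem minModeSval_tmul_bounds (S : Tensor3 r₁ r₂ r₃) {P1 : Matrix (Fin p₁) (Fin r₁) ℝ}
    {P2 : Matrix (Fin p₂) (Fin r₂) ℝ} {P3 : Matrix (Fin p₃) (Fin r₃) ℝ}
    {a₁ a₂ a₃ b₁ b₂ b₃ : ℝ}
    (h₁ : HasStretchBounds P1 a₁ b₁) (h₂ : HasStretchBounds P2 a₂ b₂)
    (h₃ : HasStretchBounds P3 a₃ b₃) (j₁ j₂ j₃ : ℕ) :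
    a₁ * a₂ * a₃ * minModeSval S j₁ j₂ j₃ ≤
        minModeSval (tmul S P1 P2 P3) j₁ j₂ j₃ ∧
      minModeSval (tmul S P1 P2 P3) j₁ j₂ j₃ ≤ b₁ * b₂ * b₃ * minModeSval S j₁ j₂ j₃ := by
  obtain ⟨lo₁, hi₁⟩ := h₁.sval_mul_mul_kronecker_transpose h₂ h₃ (mat1 S) j₁
  obtain ⟨lo₂, hi₂⟩ := h₂.sval_mul_mul_kronecker_transpose h₁ h₃ (mat2 S) j₂
  obtain ⟨lo₃, hi₃⟩ := h₃.sval_mul_mul_kronecker_transpose h₁ h₂ (mat3 S) j₃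
  rw [← mat1_tmul] at lo₁ hi₁
  rw [← mat2_tmul] at lo₂ hi₂
  rw [← mat3_tmul] at lo₃ hi₃
  have ha : 0 ≤ a₁ * a₂ * a₃ := by
    have := h₁.pos; have := h₂.pos; have := h₃.pos; positivity
  have hb : 0 ≤ b₁ * b₂ * b₃ := by
    have := h₁.upper_pos; have := h₂.upper_pos; have := h₃.upper_pos; positivity
  simp only [minModeSval, mul_min_of_nonneg _ _ ha, mul_min_of_nonneg _ _ hb]
  constructor
  · exact min_le_min (min_le_min (by linarith) (by linarith)) (by linarith)
  · exact min_le_min (min_le_min (by linarith) (by linarith)) (by linarith)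

end Tensor

lemma card_le_of_forall_isPureRow {p r : ℕ} {P : Matrix (Fin p) (Fin r) ℝ}
    (h : ∀ l, ∃ i, IsPureRow P i l) : r ≤ p := by
  choose f hf using h
  have hinj : Function.Injective f := fun l l' hll' => by
    by_contra hne
    have := hf l' l
    simp [← hll', hf l l, hne] at this
  simpa using Fintype.card_le_of_injective f hinj

end TuckerBlockmodel

open TuckerBlockmodel in
/-- the smallest nonzero singular value of a regular tensor mixed-membership
blockmodel is of order `Δ·√(p₁p₂p₃/(r₁r₂r₃))`. -/
theorem stmt3 (c C : ℝ) (hc : 0 < c) (hcC : c ≤ C) :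
    ∃ c' C' : ℝ, 0 < c' ∧ 0 < C' ∧
      ∀ (p₁ p₂ p₃ r₁ r₂ r₃ : ℕ) (S : Tensor3 r₁ r₂ r₃)
        (P1 : Matrix (Fin p₁) (Fin r₁) ℝ) (P2 : Matrix (Fin p₂) (Fin r₂) ℝ)
        (P3 : Matrix (Fin p₃) (Fin r₃) ℝ),
        IsMembership P1 → IsMembership P2 → IsMembership P3 →
        r₁ ≤ r₂ * r₃ → r₂ ≤ r₁ * r₃ → r₃ ≤ r₁ * r₂ →
        (mat1 S).rank = r₁ → (mat2 S).rank = r₂ → (mat3 S).rank = r₃ →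
        (∀ l, ∃ i, IsPureRow P1 i l) → (∀ l, ∃ i, IsPureRow P2 i l) →
        (∀ l, ∃ i, IsPureRow P3 i l) →
        c * ((p₁ : ℝ) / r₁) ≤ eigMin (P1ᵀ * P1) → eigMax (P1ᵀ * P1) ≤ C * ((p₁ : ℝ) / r₁) →
        c * ((p₂ : ℝ) / r₂) ≤ eigMin (P2ᵀ * P2) → eigMax (P2ᵀ * P2) ≤ C * ((p₂ : ℝ) / r₂) →
        c * ((p₃ : ℝ) / r₃) ≤ eigMin (P3ᵀ * P3) → eigMax (P3ᵀ * P3) ≤ C * ((p₃ : ℝ) / r₃) →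
        ∀ T : Tensor3 p₁ p₂ p₃, T = tmul S P1 P2 P3 →
          c' * (min (min (sval (mat1 S) r₁) (sval (mat2 S) r₂)) (sval (mat3 S) r₃)) *
              Real.sqrt ((p₁ * p₂ * p₃ : ℝ) / (r₁ * r₂ * r₃ : ℝ)) ≤
            min (min (sval (mat1 T) r₁) (sval (mat2 T) r₂)) (sval (mat3 T) r₃) ∧
          min (min (sval (mat1 T) r₁) (sval (mat2 T) r₂)) (sval (mat3 T) r₃) ≤
            C' * (min (min (sval (mat1 S) r₁) (sval (mat2 S) r₂)) (sval (mat3 S) r₃)) *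
              Real.sqrt ((p₁ * p₂ * p₃ : ℝ) / (r₁ * r₂ * r₃ : ℝ)) := by
  have hC : 0 < C := hc.trans_le hcC
  refine ⟨√(c ^ 3), √(C ^ 3), by positivity, by positivity, ?_⟩
  intro p₁ p₂ p₃ r₁ r₂ r₃ S P1 P2 P3 _ _ _ h₁₂₃ h₂₁₃ h₃₁₂ _ _ _
    hpure₁ hpure₂ hpure₃ hmin₁ hmax₁ hmin₂ hmax₂ hmin₃ hmax₃ T rfl
  by_cases hr : r₁ = 0 ∨ r₂ = 0 ∨ r₃ = 0
  · obtain ⟨rfl, rfl, rfl⟩ : r₁ = 0 ∧ r₂ = 0 ∧ r₃ = 0 := by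
      rcases hr with rfl | rfl | rfl <;> omega
    simp [sval_zero]
  rw [not_or, not_or] at hr
  obtain ⟨hr₁, hr₂, hr₃⟩ := hr
  have hp₁ := (Nat.pos_of_ne_zero hr₁).trans_le (card_le_of_forall_isPureRow hpure₁)
  have hp₂ := (Nat.pos_of_ne_zero hr₂).trans_le (card_le_of_forall_isPureRow hpure₂)
  have hp₃ := (Nat.pos_of_ne_zero hr₃).trans_le (card_le_of_forall_isPureRow hpure₃)
  have hsqrt (d : ℝ) (hd : 0 ≤ d) :
      √(d * (p₁ / r₁)) * √(d * (p₂ / r₂)) * √(d * (p₃ / r₃)) =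
        √(d ^ 3) * √(p₁ * p₂ * p₃ / (r₁ * r₂ * r₃)) := by
    rw [← Real.sqrt_mul (by positivity), ← Real.sqrt_mul (by positivity),
      ← Real.sqrt_mul (by positivity)]
    ring_nf
  obtain ⟨hlo, hhi⟩ := minModeSval_tmul_bounds S
    (.of_eigMin_eigMax (by positivity) (by gcongr) hmin₁ hmax₁)
    (.of_eigMin_eigMax (by positivity) (by gcongr) hmin₂ hmax₂)
    (.of_eigMin_eigMax (by positivity) (by gcongr) hmin₃ hmax₃) r₁ r₂ r₃
  rw [hsqrt c hc.le] at hlo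
  rw [hsqrt C hC.le] at hhi
  unfold minModeSval at hlo hhi
  constructor <;> linarith

end
end

section
/- Let T = S ×₁Π₁ ×₂Π₂ ×₃Π₃ be a tensor mixed-membership blockmodel such that for every k: r_k ≤ ∏_{j≠k} r_j, M_k(S) has rank r_k, every community of every mode has a pure node, and λ_min(Π_kᵀΠ_k) ≥ c·p_k/r_k for a constant c > 0. Let U_k ∈ ℝ^{p_k×r_k} denote the matrix of left singular vectors in a compact SVD of M_k(T). Then for each k, ‖U_k‖_{2,∞} ≤ c^{-1/2}·√(r_k/p_k); in particular the incoherence parameter μ₀ := max_k √(p_k/r_k)·‖U_k‖_{2,∞} satisfies μ₀ ≤ c^{-1/2}. -/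
open Matrix
open scoped BigOperators Kronecker

noncomputable section

/-- `‖M‖_{2,∞}`: largest Euclidean norm of a row of `M`. -/
def twoInf {m n : Type*} [Fintype m] [Fintype n] (M : Matrix m n ℝ) : ℝ :=
  sSup {c | ∃ i, c = enorm2 (M i)}

/-- `M` has orthonormal columns. -/
def OrthoCols {m : Type*} {r : ℕ} [Fintype m] (U : Matrix m (Fin r) ℝ) : Prop :=
  Uᵀ * U = 1

/-- A compact SVD of a rank-`r` matrix. -/
def IsCompactSVD {m n : Type*} {r : ℕ} [Fintype m] [Fintype n]
    (M : Matrix m n ℝ) (U : Matrix m (Fin r) ℝ) (L : Matrix (Fin r) (Fin r) ℝ)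
    (V : Matrix n (Fin r) ℝ) : Prop :=
  OrthoCols U ∧ OrthoCols V ∧ (∀ i j, i ≠ j → L i j = 0) ∧ (∀ i, 0 < L i i) ∧
    M = U * L * Vᵀ

/-!
Every mode-`k` matricization factors as `M_k(T) = Π_k N_k`, so the left singular vectors are
`U_k = Π_k W` for a square `W`, and `U_kᵀ U_k = 1` says `Wᵀ (Π_kᵀ Π_k) W = 1`. Writing `π` for a row
of `Π_k`, `x = Wᵀ π` for the matching row of `U_k` and `y = W x`, one has `π ⬝ y = ‖x‖²` and
`yᵀ (Π_kᵀ Π_k) y = ‖x‖²`. Cauchy–Schwarz and the eigenvalue bound `λ ‖y‖² ≤ ‖x‖²` then give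
`λ ‖x‖² ≤ ‖π‖² ≤ 1`, i.e. every row of `U_k` has norm at most `λ^{-1/2} ≤ c^{-1/2} √(r_k/p_k)`.
-/

lemma dotProduct_transpose_mul_self_mulVec {m n : Type*} [Fintype m] [Fintype n]
    (P : Matrix m n ℝ) (v : n → ℝ) :
    v ⬝ᵥ (Pᵀ * P) *ᵥ v = P *ᵥ v ⬝ᵥ P *ᵥ v := by
  rw [← mulVec_mulVec, dotProduct_mulVec, vecMul_transpose]

lemma dotProduct_transpose_mul_self_mulVec_nonneg {m n : Type*} [Fintype m] [Fintype n]
    (P : Matrix m n ℝ) (v : n → ℝ) : 0 ≤ v ⬝ᵥ (Pᵀ * P) *ᵥ v := by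
  rw [dotProduct_transpose_mul_self_mulVec]
  exact Finset.sum_nonneg fun i _ => mul_self_nonneg _

lemma mul_sum_sq_le_of_le_eigMin {m n : Type*} [Fintype m] [Fintype n]
    (P : Matrix m n ℝ) {lam : ℝ} (hle : lam ≤ eigMin (Pᵀ * P)) (v : n → ℝ) :
    lam * ∑ i, v i ^ 2 ≤ v ⬝ᵥ (Pᵀ * P) *ᵥ v := by
  set s := ∑ i, v i ^ 2
  have hs : 0 ≤ s := Finset.sum_nonneg fun i _ => sq_nonneg (v i)
  rcases hs.eq_or_lt with hs | hs
  · rw [← hs, mul_zero]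
    exact dotProduct_transpose_mul_self_mulVec_nonneg P v
  set u := (√s)⁻¹ • v
  have hu : enorm2 u = 1 := by
    have : ∑ i, u i ^ 2 = (√s ^ 2)⁻¹ * s := by
      simp only [u, Pi.smul_apply, smul_eq_mul, mul_pow, inv_pow, ← Finset.mul_sum]; rfl
    rw [enorm2, this, Real.sq_sqrt hs.le, inv_mul_cancel₀ hs.ne', Real.sqrt_one]
  have hbdd : BddBelow {c | ∃ w : n → ℝ, enorm2 w = 1 ∧ c = w ⬝ᵥ (Pᵀ * P) *ᵥ w} :=
    ⟨0, by rintro _ ⟨w, -, rfl⟩; exact dotProduct_transpose_mul_self_mulVec_nonneg P w⟩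
  have hquad : u ⬝ᵥ (Pᵀ * P) *ᵥ u = s⁻¹ * (v ⬝ᵥ (Pᵀ * P) *ᵥ v) := by
    simp only [u, mulVec_smul, smul_dotProduct, dotProduct_smul, smul_eq_mul, ← mul_assoc,
      ← mul_inv]
    rw [Real.mul_self_sqrt hs.le]
  rw [mul_comm, ← le_inv_mul_iff₀ hs, ← hquad]
  exact hle.trans (csInf_le hbdd ⟨u, hu, rfl⟩)

lemma IsMembership.sum_sq_le_one {p r : ℕ} {P : Matrix (Fin p) (Fin r) ℝ}
    (hP : IsMembership P) (i : Fin p) : ∑ l, P i l ^ 2 ≤ 1 := by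
  calc ∑ l, P i l ^ 2 ≤ ∑ l, P i l := Finset.sum_le_sum fun l _ => by
        have hle : P i l ≤ 1 :=
          hP.2 i ▸ Finset.single_le_sum (fun l' _ => hP.1 i l') (Finset.mem_univ l)
        nlinarith [hP.1 i l]
    _ = 1 := hP.2 i

lemma IsMembership.pos {p r : ℕ} {P : Matrix (Fin p) (Fin r) ℝ}
    (hP : IsMembership P) (i : Fin p) : 0 < r := by
  rcases Nat.eq_zero_or_pos r with rfl | hr
  · simpa using hP.2 i
  · exact hr

lemma IsCompactSVD.left_eq {m n : Type*} {r : ℕ} [Fintype m] [Fintype n]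
    {M : Matrix m n ℝ} {U : Matrix m (Fin r) ℝ} {L : Matrix (Fin r) (Fin r) ℝ}
    {V : Matrix n (Fin r) ℝ} (h : IsCompactSVD M U L V) :
    U = M * V * diagonal fun i => (L i i)⁻¹ := by
  obtain ⟨-, hV, hLdiag, hLpos, rfl⟩ := h
  have hLinv : L * diagonal (fun i => (L i i)⁻¹) = 1 := by
    ext i j
    rw [mul_diagonal]
    by_cases hij : i = j
    · subst hij; simp [(hLpos i).ne']
    · simp [hLdiag i j hij, one_apply_ne hij]
  rw [Matrix.mul_assoc (U * L), hV, Matrix.mul_one, Matrix.mul_assoc, hLinv, Matrix.mul_one]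

lemma mul_sum_sq_row_le {p r q : ℕ} (P : Matrix (Fin p) (Fin r) ℝ) (W : Matrix (Fin r) (Fin q) ℝ)
    (hPW : OrthoCols (P * W)) {lam : ℝ} (hlam : 0 ≤ lam) (hle : lam ≤ eigMin (Pᵀ * P))
    (i : Fin p) :
    lam * ∑ j, (P * W) i j ^ 2 ≤ ∑ l, P i l ^ 2 := by
  set x := (P * W) i
  set s := ∑ j, x j ^ 2
  set y := W *ᵥ x
  have hxx : x ⬝ᵥ x = s := by simp only [dotProduct, s, sq]
  have hπy : P i ⬝ᵥ y = s := by
    rw [dotProduct_mulVec, ← mul_apply_eq_vecMul, hxx]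
  have hyGy : y ⬝ᵥ (Pᵀ * P) *ᵥ y = s := by
    rw [dotProduct_transpose_mul_self_mulVec, mulVec_mulVec, ← dotProduct_transpose_mul_self_mulVec,
      hPW, one_mulVec, hxx]
  have hCS : s ^ 2 ≤ (∑ l, P i l ^ 2) * ∑ l, y l ^ 2 :=
    hπy ▸ Finset.sum_mul_sq_le_sq_mul_sq Finset.univ (P i) y
  have hray : lam * ∑ l, y l ^ 2 ≤ s := hyGy ▸ mul_sum_sq_le_of_le_eigMin P hle y
  have hs : 0 ≤ s := Finset.sum_nonneg fun j _ => sq_nonneg _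
  have hπ : 0 ≤ ∑ l, P i l ^ 2 := Finset.sum_nonneg fun l _ => sq_nonneg _
  rcases hs.eq_or_lt with hs0 | hs0
  · rw [← hs0, mul_zero]; exact hπ
  · refine le_of_mul_le_mul_right ?_ hs0
    nlinarith [mul_le_mul_of_nonneg_left hCS hlam, mul_le_mul_of_nonneg_left hray hπ]

lemma twoInf_le {m n : Type*} [Fintype m] [Fintype n] {M : Matrix m n ℝ} {b : ℝ}
    (hb : 0 ≤ b) (h : ∀ i, enorm2 (M i) ≤ b) : twoInf M ≤ b :=
  Real.sSup_le (by rintro _ ⟨i, rfl⟩; exact h i) hb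

lemma twoInf_le_of_eq_mul {p r : ℕ} {n : Type*} [Fintype n] {c : ℝ} (hc : 0 < c)
    {P : Matrix (Fin p) (Fin r) ℝ} (hP : IsMembership P)
    (he : c * ((p : ℝ) / r) ≤ eigMin (Pᵀ * P))
    {M : Matrix (Fin p) n ℝ} {N : Matrix (Fin r) n ℝ} (hMN : M = P * N)
    {U : Matrix (Fin p) (Fin r) ℝ} {L : Matrix (Fin r) (Fin r) ℝ} {V : Matrix n (Fin r) ℝ}
    (hSVD : IsCompactSVD M U L V) :
    twoInf U ≤ (√c)⁻¹ * √((r : ℝ) / p) := by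
  refine twoInf_le (by positivity) fun i => ?_
  have hp : (0 : ℝ) < p := Nat.cast_pos.2 (Fin.pos i)
  have hr : (0 : ℝ) < r := Nat.cast_pos.2 (hP.pos i)
  have hU : U = P * (N * V * diagonal fun i => (L i i)⁻¹) := by
    rw [hSVD.left_eq, hMN, Matrix.mul_assoc, Matrix.mul_assoc, Matrix.mul_assoc]
  have hrow : c * (p / r) * ∑ j, U i j ^ 2 ≤ 1 := by
    rw [hU]
    refine (mul_sum_sq_row_le P _ (hU ▸ hSVD.1) (by positivity) he i).trans (hP.sum_sq_le_one i)
  have hsq : ∑ j, U i j ^ 2 ≤ r / (c * p) := by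
    rw [le_div_iff₀ (by positivity)]
    calc (∑ j, U i j ^ 2) * (c * p) = r * (c * (p / r) * ∑ j, U i j ^ 2) := by
          field_simp
      _ ≤ r := mul_le_of_le_one_right hr.le hrow
  calc enorm2 (U i) ≤ √(r / (c * p)) := Real.sqrt_le_sqrt hsq
    _ = (√c)⁻¹ * √(r / p) := by
      rw [div_mul_eq_div_div_swap, Real.sqrt_div' _ hc.le, div_eq_inv_mul]

lemma mat1_tmul_s4 {r₁ r₂ r₃ p₁ p₂ p₃ : ℕ} (S : Tensor3 r₁ r₂ r₃)
    (A : Matrix (Fin p₁) (Fin r₁) ℝ) (B : Matrix (Fin p₂) (Fin r₂) ℝ)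
    (C : Matrix (Fin p₃) (Fin r₃) ℝ) :
    mat1 (tmul S A B C) = A * of fun a jk => ∑ b, ∑ c, B jk.1 b * C jk.2 c * S a b c := by
  ext i jk
  simp only [mat1, tmul, mul_apply, of_apply, Finset.mul_sum]
  exact Finset.sum_congr rfl fun a _ => Finset.sum_congr rfl fun b _ =>
    Finset.sum_congr rfl fun c _ => by ring

lemma mat2_tmul_s4 {r₁ r₂ r₃ p₁ p₂ p₃ : ℕ} (S : Tensor3 r₁ r₂ r₃)
    (A : Matrix (Fin p₁) (Fin r₁) ℝ) (B : Matrix (Fin p₂) (Fin r₂) ℝ)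
    (C : Matrix (Fin p₃) (Fin r₃) ℝ) :
    mat2 (tmul S A B C) = B * of fun b ik => ∑ a, ∑ c, A ik.1 a * C ik.2 c * S a b c := by
  ext j ik
  simp only [mat2, tmul, mul_apply, of_apply, Finset.mul_sum]
  rw [Finset.sum_comm]
  exact Finset.sum_congr rfl fun b _ => Finset.sum_congr rfl fun a _ =>
    Finset.sum_congr rfl fun c _ => by ring

lemma mat3_tmul_s4 {r₁ r₂ r₃ p₁ p₂ p₃ : ℕ} (S : Tensor3 r₁ r₂ r₃)
    (A : Matrix (Fin p₁) (Fin r₁) ℝ) (B : Matrix (Fin p₂) (Fin r₂) ℝ)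
    (C : Matrix (Fin p₃) (Fin r₃) ℝ) :
    mat3 (tmul S A B C) = C * of fun c ij => ∑ a, ∑ b, A ij.1 a * B ij.2 b * S a b c := by
  ext k ij
  simp only [mat3, tmul, mul_apply, of_apply, Finset.mul_sum]
  rw [Finset.sum_comm_cycle]
  exact Finset.sum_congr rfl fun c _ => Finset.sum_congr rfl fun a _ =>
    Finset.sum_congr rfl fun b _ => by ring

lemma sqrt_div_mul_le_of_le_mul_sqrt_div {p r : ℕ} {c x : ℝ} (hx : x ≤ (√c)⁻¹ * √((r : ℝ) / p)) :
    √((p : ℝ) / r) * x ≤ (√c)⁻¹ := by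
  have hone : √((p : ℝ) / r) * √((r : ℝ) / p) ≤ 1 := by
    rw [← Real.sqrt_mul (by positivity), div_mul_div_comm, mul_comm (r : ℝ)]
    exact Real.sqrt_le_one.2 (div_self_le_one _)
  calc √((p : ℝ) / r) * x ≤ √((p : ℝ) / r) * ((√c)⁻¹ * √((r : ℝ) / p)) := by gcongr
    _ = (√c)⁻¹ * (√((p : ℝ) / r) * √((r : ℝ) / p)) := by ring
    _ ≤ (√c)⁻¹ := mul_le_of_le_one_right (by positivity) hone

theorem stmt4_general {p₁ p₂ p₃ r₁ r₂ r₃ : ℕ} (c : ℝ) (hc : 0 < c)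
    (S : Tensor3 r₁ r₂ r₃)
    (P1 : Matrix (Fin p₁) (Fin r₁) ℝ) (P2 : Matrix (Fin p₂) (Fin r₂) ℝ)
    (P3 : Matrix (Fin p₃) (Fin r₃) ℝ)
    (hm1 : IsMembership P1) (hm2 : IsMembership P2) (hm3 : IsMembership P3)
    (he1 : c * ((p₁ : ℝ) / r₁) ≤ eigMin (P1ᵀ * P1))
    (he2 : c * ((p₂ : ℝ) / r₂) ≤ eigMin (P2ᵀ * P2))
    (he3 : c * ((p₃ : ℝ) / r₃) ≤ eigMin (P3ᵀ * P3))
    (T : Tensor3 p₁ p₂ p₃) (hT : T = tmul S P1 P2 P3)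
    (U1 : Matrix (Fin p₁) (Fin r₁) ℝ) (L1 : Matrix (Fin r₁) (Fin r₁) ℝ)
    (V1 : Matrix (Fin p₂ × Fin p₃) (Fin r₁) ℝ) (h1 : IsCompactSVD (mat1 T) U1 L1 V1)
    (U2 : Matrix (Fin p₂) (Fin r₂) ℝ) (L2 : Matrix (Fin r₂) (Fin r₂) ℝ)
    (V2 : Matrix (Fin p₁ × Fin p₃) (Fin r₂) ℝ) (h2 : IsCompactSVD (mat2 T) U2 L2 V2)
    (U3 : Matrix (Fin p₃) (Fin r₃) ℝ) (L3 : Matrix (Fin r₃) (Fin r₃) ℝ)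
    (V3 : Matrix (Fin p₁ × Fin p₂) (Fin r₃) ℝ) (h3 : IsCompactSVD (mat3 T) U3 L3 V3) :
    (twoInf U1 ≤ (Real.sqrt c)⁻¹ * Real.sqrt ((r₁ : ℝ) / p₁) ∧
     twoInf U2 ≤ (Real.sqrt c)⁻¹ * Real.sqrt ((r₂ : ℝ) / p₂) ∧
     twoInf U3 ≤ (Real.sqrt c)⁻¹ * Real.sqrt ((r₃ : ℝ) / p₃)) ∧
    max (max (Real.sqrt ((p₁ : ℝ) / r₁) * twoInf U1)
          (Real.sqrt ((p₂ : ℝ) / r₂) * twoInf U2))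
        (Real.sqrt ((p₃ : ℝ) / r₃) * twoInf U3) ≤ (Real.sqrt c)⁻¹ := by
  subst hT
  have hb1 := twoInf_le_of_eq_mul hc hm1 he1 (mat1_tmul_s4 S P1 P2 P3) h1
  have hb2 := twoInf_le_of_eq_mul hc hm2 he2 (mat2_tmul_s4 S P1 P2 P3) h2
  have hb3 := twoInf_le_of_eq_mul hc hm3 he3 (mat3_tmul_s4 S P1 P2 P3) h3
  exact ⟨⟨hb1, hb2, hb3⟩, max_le (max_le (sqrt_div_mul_le_of_le_mul_sqrt_div hb1)
    (sqrt_div_mul_le_of_le_mul_sqrt_div hb2)) (sqrt_div_mul_le_of_le_mul_sqrt_div hb3)⟩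

/-- incoherence of the singular vectors of a tensor mixed-membership
blockmodel. -/
theorem stmt4 {p₁ p₂ p₃ r₁ r₂ r₃ : ℕ} (c : ℝ) (hc : 0 < c)
    (S : Tensor3 r₁ r₂ r₃)
    (P1 : Matrix (Fin p₁) (Fin r₁) ℝ) (P2 : Matrix (Fin p₂) (Fin r₂) ℝ)
    (P3 : Matrix (Fin p₃) (Fin r₃) ℝ)
    (hm1 : IsMembership P1) (hm2 : IsMembership P2) (hm3 : IsMembership P3)
    (hr1 : r₁ ≤ r₂ * r₃) (hr2 : r₂ ≤ r₁ * r₃) (hr3 : r₃ ≤ r₁ * r₂)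
    (hS1 : (mat1 S).rank = r₁) (hS2 : (mat2 S).rank = r₂) (hS3 : (mat3 S).rank = r₃)
    (hp1 : ∀ l, ∃ i, IsPureRow P1 i l) (hp2 : ∀ l, ∃ i, IsPureRow P2 i l)
    (hp3 : ∀ l, ∃ i, IsPureRow P3 i l)
    (he1 : c * ((p₁ : ℝ) / r₁) ≤ eigMin (P1ᵀ * P1))
    (he2 : c * ((p₂ : ℝ) / r₂) ≤ eigMin (P2ᵀ * P2))
    (he3 : c * ((p₃ : ℝ) / r₃) ≤ eigMin (P3ᵀ * P3))
    (T : Tensor3 p₁ p₂ p₃) (hT : T = tmul S P1 P2 P3)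
    (U1 : Matrix (Fin p₁) (Fin r₁) ℝ) (L1 : Matrix (Fin r₁) (Fin r₁) ℝ)
    (V1 : Matrix (Fin p₂ × Fin p₃) (Fin r₁) ℝ) (h1 : IsCompactSVD (mat1 T) U1 L1 V1)
    (U2 : Matrix (Fin p₂) (Fin r₂) ℝ) (L2 : Matrix (Fin r₂) (Fin r₂) ℝ)
    (V2 : Matrix (Fin p₁ × Fin p₃) (Fin r₂) ℝ) (h2 : IsCompactSVD (mat2 T) U2 L2 V2)
    (U3 : Matrix (Fin p₃) (Fin r₃) ℝ) (L3 : Matrix (Fin r₃) (Fin r₃) ℝ)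
    (V3 : Matrix (Fin p₁ × Fin p₂) (Fin r₃) ℝ) (h3 : IsCompactSVD (mat3 T) U3 L3 V3) :
    (twoInf U1 ≤ (Real.sqrt c)⁻¹ * Real.sqrt ((r₁ : ℝ) / p₁) ∧
     twoInf U2 ≤ (Real.sqrt c)⁻¹ * Real.sqrt ((r₂ : ℝ) / p₂) ∧
     twoInf U3 ≤ (Real.sqrt c)⁻¹ * Real.sqrt ((r₃ : ℝ) / p₃)) ∧
    max (max (Real.sqrt ((p₁ : ℝ) / r₁) * twoInf U1)
          (Real.sqrt ((p₂ : ℝ) / r₂) * twoInf U2))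
        (Real.sqrt ((p₃ : ℝ) / r₃) * twoInf U3) ≤ (Real.sqrt c)⁻¹ :=
  stmt4_general c hc S P1 P2 P3 hm1 hm2 hm3 he1 he2 he3 T hT U1 L1 V1 h1 U2 L2 V2 h2 U3 L3 V3 h3

end
end

section
/- Let U, Û ∈ ℝ^{p×r} have orthonormal columns, let H := UᵀÛ, let H = AΣBᵀ be a singular value decomposition of H with A, B ∈ O(r), and set W := ABᵀ (the matrix sign of H). If ‖U‖_{2,∞} ≤ μ₀·√(r/p), then ‖U·W − U·Uᵀ·Û‖_{2,∞} ≤ μ₀·√(r/p)·‖sinΘ(Û,U)‖². -/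
/-!
With `Σ = diag σ`, one has `U W - U Uᵀ Û = U A (I - Σ) Bᵀ`, and `‖U M‖_{2,∞} ≤ ‖U‖_{2,∞} ‖M‖`,
so it suffices to show `|1 - σⱼ| ≤ ‖sin Θ‖²` for every `j`. The `σⱼ` are the cosines of the
principal angles: for the unit vector `w = A eⱼ` one has `‖Ûᵀ U w‖ = σⱼ`, so Pythagoras gives
`σⱼ² + ‖(I - Û Ûᵀ) U w‖² = 1`. Hence `0 ≤ σⱼ ≤ 1` and `1 - σⱼ ≤ 1 - σⱼ² ≤ ‖sin Θ‖²`.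
-/

open Matrix

noncomputable section

/-- Spectral norm of a matrix. -/
def spec {m n : Type*} [Fintype m] [Fintype n] (M : Matrix m n ℝ) : ℝ :=
  sSup {c | ∃ v : n → ℝ, enorm2 v ≤ 1 ∧ c = enorm2 (M.mulVec v)}

theorem Matrix.mulVec_dotProduct_mulVec_self {R m n : Type*} [CommSemiring R] [Fintype m]
    [Fintype n] (M : Matrix m n R) (v : n → R) :
    M *ᵥ v ⬝ᵥ M *ᵥ v = v ⬝ᵥ (Mᵀ * M) *ᵥ v := by
  rw [dotProduct_mulVec, ← mulVec_transpose, mulVec_mulVec, dotProduct_comm]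

theorem Matrix.mul_apply_eq_transpose_mulVec {R m n k : Type*} [CommSemiring R] [Fintype n]
    (U : Matrix m n R) (M : Matrix n k R) (i : m) : (U * M) i = Mᵀ *ᵥ U i := by
  rw [← vecMul_transpose, transpose_transpose]
  rfl

section EuclideanNorm

variable {m n : Type*} [Fintype m] [Fintype n]

theorem enorm2_nonneg (v : n → ℝ) : 0 ≤ enorm2 v := Real.sqrt_nonneg _

theorem enorm2_eq_sqrt_dotProduct (v : n → ℝ) : enorm2 v = Real.sqrt (v ⬝ᵥ v) := by
  simp only [enorm2, dotProduct, sq]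

theorem enorm2_sq (v : n → ℝ) : enorm2 v ^ 2 = v ⬝ᵥ v := by
  rw [enorm2, Real.sq_sqrt (Finset.sum_nonneg fun i _ => sq_nonneg (v i))]
  simp only [dotProduct, sq]

theorem enorm2_smul (c : ℝ) (v : n → ℝ) : enorm2 (c • v) = |c| * enorm2 v := by
  simp only [enorm2, Pi.smul_apply, smul_eq_mul, mul_pow, ← Finset.mul_sum]
  rw [Real.sqrt_mul (sq_nonneg c), Real.sqrt_sq_eq_abs]

theorem enorm2_single [DecidableEq n] (j : n) : enorm2 (Pi.single j (1 : ℝ)) = 1 := by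
  simp [enorm2, Pi.single_apply]

theorem enorm2_le_enorm2_of_abs_le {u v : n → ℝ} (h : ∀ i, |u i| ≤ |v i|) :
    enorm2 u ≤ enorm2 v :=
  Real.sqrt_le_sqrt <| Finset.sum_le_sum fun i _ => sq_le_sq.mpr (h i)

theorem enorm2_mulVec_of_transpose_mul_self [DecidableEq n] {M : Matrix m n ℝ}
    (hM : Mᵀ * M = 1) (v : n → ℝ) : enorm2 (M *ᵥ v) = enorm2 v := by
  rw [enorm2_eq_sqrt_dotProduct, mulVec_dotProduct_mulVec_self, hM, one_mulVec,
    enorm2_eq_sqrt_dotProduct]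

theorem enorm2_diagonal_mulVec_le [DecidableEq n] {d : n → ℝ} {c : ℝ} (hc : 0 ≤ c)
    (hd : ∀ i, |d i| ≤ c) (v : n → ℝ) : enorm2 (diagonal d *ᵥ v) ≤ c * enorm2 v := by
  rw [← abs_of_nonneg hc, ← enorm2_smul]
  refine enorm2_le_enorm2_of_abs_le fun i => ?_
  rw [mulVec_diagonal, Pi.smul_apply, smul_eq_mul, abs_mul, abs_mul, abs_of_nonneg hc]
  exact mul_le_mul_of_nonneg_right (hd i) (abs_nonneg _)

theorem enorm2_mulVec_le_frobenius (M : Matrix m n ℝ) (v : n → ℝ) :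
    enorm2 (M *ᵥ v) ≤ Real.sqrt (∑ i, ∑ j, M i j ^ 2) * enorm2 v := by
  calc enorm2 (M *ᵥ v) ≤ Real.sqrt ((∑ i, ∑ j, M i j ^ 2) * ∑ j, v j ^ 2) := by
        rw [enorm2, Finset.sum_mul]
        exact Real.sqrt_le_sqrt <| Finset.sum_le_sum fun i _ =>
          Finset.sum_mul_sq_le_sq_mul_sq _ _ _
    _ = _ := Real.sqrt_mul (Finset.sum_nonneg fun _ _ =>
        Finset.sum_nonneg fun _ _ => sq_nonneg _) _

theorem enorm2_sq_add_enorm2_sq_proj [DecidableEq m] [DecidableEq n] {Q : Matrix m n ℝ}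
    (hQ : Qᵀ * Q = 1) (x : m → ℝ) :
    enorm2 (Qᵀ *ᵥ x) ^ 2 + enorm2 ((1 - Q * Qᵀ) *ᵥ x) ^ 2 = enorm2 x ^ 2 := by
  have hproj : (1 - Q * Qᵀ)ᵀ * (1 - Q * Qᵀ) = 1 - Q * Qᵀ := by
    have : Q * Qᵀ * (Q * Qᵀ) = Q * Qᵀ := by
      rw [Matrix.mul_assoc, ← Matrix.mul_assoc Qᵀ, hQ, Matrix.one_mul]
    rw [transpose_sub, transpose_one, transpose_mul, transpose_transpose, sub_mul, mul_sub,
      mul_sub, this]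
    simp only [Matrix.one_mul, Matrix.mul_one]
    abel
  rw [enorm2_sq, enorm2_sq, enorm2_sq, mulVec_dotProduct_mulVec_self,
    mulVec_dotProduct_mulVec_self, hproj, transpose_transpose, sub_mulVec, one_mulVec,
    dotProduct_sub]
  ring

theorem enorm2_mul_diagonal_mul_transpose_mulVec_le [DecidableEq n] {B : Matrix m n ℝ}
    {A : Matrix n n ℝ} {d : n → ℝ} {c : ℝ} (hB : Bᵀ * B = 1) (hA : Aᵀ * A = 1) (hc : 0 ≤ c)
    (hd : ∀ j, |d j| ≤ c) (x : n → ℝ) : enorm2 ((B * diagonal d * Aᵀ) *ᵥ x) ≤ c * enorm2 x := by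
  have hAt : Aᵀᵀ * Aᵀ = 1 := by rw [transpose_transpose, mul_eq_one_comm.mp hA]
  rw [← mulVec_mulVec, ← mulVec_mulVec, enorm2_mulVec_of_transpose_mul_self hB,
    ← enorm2_mulVec_of_transpose_mul_self hAt x]
  exact enorm2_diagonal_mulVec_le hc hd _

end EuclideanNorm

section OperatorNorms

variable {m n k : Type*} [Fintype m] [Fintype n] [Fintype k]

theorem enorm2_mulVec_le_spec (M : Matrix m n ℝ) {v : n → ℝ} (hv : enorm2 v ≤ 1) :
    enorm2 (M *ᵥ v) ≤ spec M := by
  refine le_csSup ⟨Real.sqrt (∑ i, ∑ j, M i j ^ 2), ?_⟩ ⟨v, hv, rfl⟩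
  rintro _ ⟨w, hw, rfl⟩
  calc enorm2 (M *ᵥ w) ≤ Real.sqrt (∑ i, ∑ j, M i j ^ 2) * enorm2 w :=
        enorm2_mulVec_le_frobenius M w
    _ ≤ Real.sqrt (∑ i, ∑ j, M i j ^ 2) := mul_le_of_le_one_right (Real.sqrt_nonneg _) hw

theorem enorm2_le_twoInf (M : Matrix m n ℝ) (i : m) : enorm2 (M i) ≤ twoInf M := by
  refine le_csSup ((Set.finite_range fun i => enorm2 (M i)).bddAbove.mono ?_) ⟨i, rfl⟩
  rintro _ ⟨j, rfl⟩
  exact ⟨j, rfl⟩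

theorem twoInf_mul_le {U : Matrix m n ℝ} {M : Matrix n k ℝ} {c : ℝ} (hc : 0 ≤ c)
    (hM : ∀ x, enorm2 (Mᵀ *ᵥ x) ≤ c * enorm2 x) : twoInf (U * M) ≤ twoInf U * c := by
  have hU : 0 ≤ twoInf U := Real.sSup_nonneg <| by rintro _ ⟨i, rfl⟩; exact enorm2_nonneg _
  refine Real.sSup_le ?_ (mul_nonneg hU hc)
  rintro _ ⟨i, rfl⟩
  rw [mul_apply_eq_transpose_mulVec, mul_comm]
  exact (hM _).trans (mul_le_mul_of_nonneg_left (enorm2_le_twoInf U i) hc)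

end OperatorNorms

theorem Matrix.transpose_mulVec_mulVec_single_of_eq_svd {R n k l : Type*} [CommSemiring R]
    [Fintype n] [Fintype l] [DecidableEq l] {H : Matrix n k R} {A : Matrix n l R}
    {B : Matrix k l R} {σ : l → R} (hA : Aᵀ * A = 1) (hH : H = A * diagonal σ * Bᵀ) (j : l) :
    Hᵀ *ᵥ (A *ᵥ Pi.single j 1) = σ j • (B *ᵥ Pi.single j 1) := by
  simp only [hH, transpose_mul, transpose_transpose, diagonal_transpose, ← mulVec_mulVec]
  rw [mulVec_mulVec (M := Aᵀ), hA, one_mulVec, diagonal_mulVec_single, mul_one, ← mulVec_smul,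
    ← Pi.single_smul', smul_eq_mul, mul_one]

theorem abs_one_sub_singularValue_le_spec_sq {m n k l : Type*} [Fintype m] [Fintype n]
    [Fintype k] [Fintype l] [DecidableEq m] [DecidableEq n] [DecidableEq k] [DecidableEq l]
    {U : Matrix m n ℝ} {Uh : Matrix m k ℝ}
    {A : Matrix n l ℝ} {B : Matrix k l ℝ} {σ : l → ℝ} (hU : Uᵀ * U = 1) (hUh : Uhᵀ * Uh = 1)
    (hA : Aᵀ * A = 1) (hB : Bᵀ * B = 1) (hSVD : Uᵀ * Uh = A * diagonal σ * Bᵀ) {j : l}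
    (hσ : 0 ≤ σ j) : |1 - σ j| ≤ spec ((1 - Uh * Uhᵀ) * U) ^ 2 := by
  set w := A *ᵥ Pi.single j 1
  have hw : enorm2 w = 1 := by
    rw [enorm2_mulVec_of_transpose_mul_self hA, enorm2_single]
  have hUw : enorm2 (U *ᵥ w) = 1 := by rw [enorm2_mulVec_of_transpose_mul_self hU, hw]
  have hcos : enorm2 (Uhᵀ *ᵥ (U *ᵥ w)) = σ j := by
    rw [mulVec_mulVec, ← transpose_transpose U, ← transpose_mul,
      transpose_mulVec_mulVec_single_of_eq_svd hA hSVD, enorm2_smul,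
      enorm2_mulVec_of_transpose_mul_self hB, enorm2_single, mul_one, abs_of_nonneg hσ]
  have hsin : enorm2 ((1 - Uh * Uhᵀ) *ᵥ (U *ᵥ w)) ≤ spec ((1 - Uh * Uhᵀ) * U) := by
    rw [mulVec_mulVec]
    exact enorm2_mulVec_le_spec _ hw.le
  have hpyth := enorm2_sq_add_enorm2_sq_proj hUh (U *ᵥ w)
  rw [hUw, hcos] at hpyth
  have hsin0 := enorm2_nonneg ((1 - Uh * Uhᵀ) *ᵥ (U *ᵥ w))
  rw [abs_of_nonneg (by nlinarith)]
  nlinarith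

/-- closeness of the matrix sign orthogonal matrix. -/
theorem stmt12 {p r : ℕ} (U Uh : Matrix (Fin p) (Fin r) ℝ)
    (hU : OrthoCols U) (hUh : OrthoCols Uh)
    (A B Sg : Matrix (Fin r) (Fin r) ℝ)
    (hA : Aᵀ * A = 1) (hB : Bᵀ * B = 1)
    (hdiag : ∀ i j, i ≠ j → Sg i j = 0) (hnonneg : ∀ i, 0 ≤ Sg i i)
    (hSVD : Uᵀ * Uh = A * Sg * Bᵀ)
    (μ₀ : ℝ) (hμ : twoInf U ≤ μ₀ * Real.sqrt ((r : ℝ) / (p : ℝ))) :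
    twoInf (U * (A * Bᵀ) - U * Uᵀ * Uh) ≤
      μ₀ * Real.sqrt ((r : ℝ) / (p : ℝ)) * (spec ((1 - Uh * Uhᵀ) * U)) ^ 2 := by
  obtain ⟨σ, rfl⟩ : ∃ σ, diagonal σ = Sg :=
    ⟨Sg.diag, IsDiag.diagonal_diag fun i j => hdiag i j⟩
  set s := spec ((1 - Uh * Uhᵀ) * U)
  have hgap (j : Fin r) : |1 - σ j| ≤ s ^ 2 :=
    abs_one_sub_singularValue_le_spec_sq hU hUh hA hB hSVD (by simpa using hnonneg j)
  have hdiff : U * (A * Bᵀ) - U * Uᵀ * Uh = U * (A * diagonal (fun j => 1 - σ j) * Bᵀ) := by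
    have hI : diagonal (fun j => 1 - σ j) = 1 - diagonal σ := by
      rw [← diagonal_one, diagonal_sub]
    rw [hI, Matrix.mul_sub, Matrix.sub_mul, Matrix.mul_one, Matrix.mul_sub, Matrix.mul_assoc,
      hSVD]
  have hW : ∀ x, enorm2 ((A * diagonal (fun j => 1 - σ j) * Bᵀ)ᵀ *ᵥ x) ≤ s ^ 2 * enorm2 x := by
    simp only [transpose_mul, transpose_transpose, diagonal_transpose, ← Matrix.mul_assoc]
    exact enorm2_mul_diagonal_mul_transpose_mulVec_le hB hA (sq_nonneg s) hgap
  rw [hdiff]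
  exact (twoInf_mul_le (sq_nonneg s) hW).trans (mul_le_mul_of_nonneg_right hμ (sq_nonneg s))

end
end
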